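/- Let f : 2^ω → 2 be monotone, suppose f^{-1}(1) has the 2-ary intersection property (no two, possibly equal, elements of f^{-1}(1) have coordinatewise meet 0⃗), and suppose 0⃗ lies in the closure of f^{-1}(1) while f(0⃗) = 0. Then liminf ∈ ⟨f, ∧⟩, where ∧ : 2^2 → 2 is binary conjunction. -/
import Mathlib


open scoped Classical

/-- An arity: `some n` is the finite arity `n ≥ 1`; `none` is the countably infinite arity ω. -/
abbrev Arity := Option ℕ+

/-- The index set of an arity. -/
abbrev Idx : Arity → Type
  | some n => Fin (n : ℕ)
  | none => ℕ

/-- A Boolean function of some arity `1 ≤ n ≤ ω`.  The input space `Idx a → Bool`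
carries the product topology (with `Bool` discrete), the product σ-algebra (= Borel),
and the coordinatewise partial order. -/
abbrev BFun : Type := Σ a : Arity, (Idx a → Bool) → Bool

/-- A clone: a set of Boolean functions of arities `1 ≤ n ≤ ω` containing all projections
and closed under composition. -/
structure IsClone (F : Set BFun) : Prop where
  proj : ∀ (a : Arity) (i : Idx a), (⟨a, fun x => x i⟩ : BFun) ∈ F
  comp : ∀ (a b : Arity) (g : (Idx a → Bool) → Bool) (f : Idx a → (Idx b → Bool) → Bool),
      (⟨a, g⟩ : BFun) ∈ F → (∀ i, (⟨b, f i⟩ : BFun) ∈ F) →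
      (⟨b, fun x => g fun i => f i x⟩ : BFun) ∈ F

/-- The clone generated by a set of Boolean functions. -/
def cloneGen (G : Set BFun) : Set BFun := ⋂₀ {F : Set BFun | IsClone F ∧ G ⊆ F}

/-- `f` has finite arity. -/
def finitary (f : BFun) : Prop := f.1 ≠ none

/-- `f` is Borel: the preimage of `1` is a Borel set. -/
def IsBorelFun (f : BFun) : Prop := MeasurableSet {x | f.2 x = true}

/-- `f` is continuous (equivalently, depends on only finitely many coordinates). -/
def IsContFun (f : BFun) : Prop := Continuous f.2

/-- `f(0⃗) = 0`. -/
def PresBot (f : BFun) : Prop := f.2 (fun _ => false) = false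

/-- `f(1⃗) = 1`. -/
def PresTop (f : BFun) : Prop := f.2 (fun _ => true) = true

/-- `f` vanishes on a neighborhood of `0⃗`, i.e. `0⃗` is not in the closure of `f⁻¹(1)`. -/
def VanishNearBot (f : BFun) : Prop := (fun _ => false) ∉ closure {x | f.2 x = true}

/-- `f` equals `1` on a neighborhood of `1⃗`, i.e. `1⃗` is not in the closure of `f⁻¹(0)`. -/
def OneNearTop (f : BFun) : Prop := (fun _ => true) ∉ closure {x | f.2 x = false}

/-- Countably infinite disjunction `⋁ : 2^ω → 2`. -/
noncomputable def bigOr : (ℕ → Bool) → Bool := fun x => decide (∃ i, x i = true)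

/-- Countably infinite conjunction `⋀ : 2^ω → 2`. -/
noncomputable def bigAnd : (ℕ → Bool) → Bool := fun x => decide (∀ i, x i = true)

/-- `liminf : 2^ω → 2`, equal to `1` iff all but finitely many bits are `1`. -/
noncomputable def liminfF : (ℕ → Bool) → Bool := fun x => decide (∃ N, ∀ j, N ≤ j → x j = true)

/-- Binary conjunction `∧ : 2^2 → 2` as a Boolean function of arity 2. -/
def and2 : BFun := ⟨some 2, fun x => x ⟨0, by norm_num⟩ && x ⟨1, by norm_num⟩⟩

/-- Finite conjunction over the window `[n, n+k]`. -/
def winAnd (n : ℕ) : ℕ → (ℕ → Bool) → Bool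
  | 0 => fun x => x n
  | (k+1) => fun x => winAnd n k x && x (n+k+1)

lemma winAnd_true (n k : ℕ) (x : ℕ → Bool) :
    winAnd n k x = true ↔ ∀ j, n ≤ j → j ≤ n + k → x j = true := by
  induction k with
  | zero =>
    constructor
    · intro h j h1 h2
      have : j = n := le_antisymm (by omega) h1
      subst this; exact h
    · intro h; exact h n le_rfl (by omega)
  | succ k ih =>
    simp only [winAnd, Bool.and_eq_true, ih]
    constructor
    · rintro ⟨h1, h2⟩ j hj1 hj2
      by_cases hk : j ≤ n + k
      · exact h1 j hj1 hk
      · have : j = n + k + 1 := by omega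
        subst this; exact h2
    · intro h
      exact ⟨fun j h1 h2 => h j h1 (by omega), h (n+k+1) (by omega) (by omega)⟩

lemma clone_and {F : Set BFun} (hF : IsClone F) (hand : and2 ∈ F)
    {g h : (ℕ → Bool) → Bool} (hg : (⟨none, g⟩ : BFun) ∈ F) (hh : (⟨none, h⟩ : BFun) ∈ F) :
    (⟨none, fun x => g x && h x⟩ : BFun) ∈ F := by
  have hc := hF.comp (some 2) none and2.2
      (fun i => if (i : Fin ((2 : ℕ+) : ℕ)).val = 0 then g else h) hand ?_
  · have he : (fun x => and2.2 fun i =>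
        (if (i : Fin ((2 : ℕ+) : ℕ)).val = 0 then g else h) x) = fun x => g x && h x := by
      funext x
      simp [and2]
    exact he ▸ hc
  · intro i
    by_cases hi : (i : Fin ((2 : ℕ+) : ℕ)).val = 0 <;> simp only [hi, if_true, if_false] <;>
      [exact hg; exact hh]

/-- Kahane's lemma: if `f : 2^ω → 2` is monotone, `f⁻¹(1)` has the 2-ary intersection
property (no two, possibly equal, members have coordinatewise meet `0⃗`), `0⃗` lies in the
closure of `f⁻¹(1)`, and `f(0⃗) = 0`, then `liminf ∈ ⟨f, ∧⟩`. -/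
theorem liminf_mem_cloneGen (f : (ℕ → Bool) → Bool)
    (hMono : Monotone f)
    (h2IP : ∀ x y : ℕ → Bool, f x = true → f y = true → ∃ i, x i = true ∧ y i = true)
    (hCl : (fun _ => false) ∈ closure {x | f x = true})
    (hBot : f (fun _ => false) = false) :
    (⟨none, liminfF⟩ : BFun) ∈ cloneGen {(⟨none, f⟩ : BFun), and2} := by
  -- `f` is true on each "tail indicator" `e_n = fun j => decide (n ≤ j)`
  have hEn : ∀ n : ℕ, f (fun j => decide (n ≤ j)) = true := by
    intro n
    have hU : IsOpen {y : ℕ → Bool | ∀ j < n, y j = false} := by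
      have hset : {y : ℕ → Bool | ∀ j < n, y j = false} =
          Set.pi (↑(Finset.range n)) (fun _ => ({false} : Set Bool)) := by
        ext y; simp [Set.mem_pi]
      rw [hset]
      exact isOpen_set_pi (Finset.range n).finite_toSet (fun i _ => isOpen_discrete _)
    obtain ⟨x, hxU, hxf⟩ := mem_closure_iff.mp hCl _ hU (fun j _ => rfl)
    have hle : x ≤ fun j => decide (n ≤ j) := by
      intro j
      by_cases hj : n ≤ j
      · simp [hj]
      · have hx0 : x j = false := hxU j (by omega)
        simp [hx0]
    have hmn := hMono hle
    rw [Set.mem_setOf_eq] at hxf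
    rw [hxf] at hmn
    cases hfe : f (fun j => decide (n ≤ j))
    · rw [hfe] at hmn; exact absurd hmn (by decide)
    · rfl
  -- any element of `f⁻¹(1)` has `true` bits beyond every bound
  have hFin : ∀ z : ℕ → Bool, f z = true → ∀ N, ∃ j, N ≤ j ∧ z j = true := by
    intro z hz N
    obtain ⟨i, hzi, hei⟩ := h2IP z _ hz (hEn N)
    exact ⟨i, of_decide_eq_true hei, hzi⟩
  -- hence `f` vanishes on eventually-false sequences
  have hVan : ∀ z : ℕ → Bool, (∃ N, ∀ j, N ≤ j → z j = false) → f z = false := by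
    rintro z ⟨N, hN⟩
    cases hfz : f z
    · rfl
    · obtain ⟨j, hj, hzj⟩ := hFin z hfz N
      rw [hN j hj] at hzj
      exact absurd hzj (by decide)
  -- the inner composition computes the tail-conjunction
  have hInnerEq : ∀ (n : ℕ) (x : ℕ → Bool),
      f (fun k => winAnd n k x) = decide (∀ j, n ≤ j → x j = true) := by
    intro n x
    by_cases h : ∀ j, n ≤ j → x j = true
    · rw [decide_eq_true h]
      have hw : (fun k => winAnd n k x) = fun _ => true := by
        funext k
        exact (winAnd_true n k x).mpr (fun j h1 _ => h j h1)
      rw [hw]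
      have h0 := hEn 0
      have : (fun j => decide (0 ≤ j)) = fun _ : ℕ => true := by
        funext j; simp
      rwa [this] at h0
    · rw [decide_eq_false h]
      push_neg at h
      obtain ⟨j0, hj0n, hj0⟩ := h
      apply hVan
      refine ⟨j0 - n, fun k hk => ?_⟩
      cases hw : winAnd n k x
      · rfl
      · have := (winAnd_true n k x).mp hw j0 hj0n (by omega)
        exact absurd this hj0
  -- the full composition computes liminf
  have key : liminfF = fun x => f (fun n => f (fun k => winAnd n k x)) := by
    funext x
    have hrw : (fun n => f (fun k => winAnd n k x)) =
        fun n => decide (∀ j, n ≤ j → x j = true) := by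
      funext n; exact hInnerEq n x
    rw [hrw]
    by_cases hL : ∃ N, ∀ j, N ≤ j → x j = true
    · have hlim : liminfF x = true := by
        unfold liminfF; exact decide_eq_true hL
      rw [hlim]
      obtain ⟨N, hN⟩ := hL
      have hle : (fun j => decide (N ≤ j)) ≤ fun n => decide (∀ j, n ≤ j → x j = true) := by
        intro n
        show decide (N ≤ n) ≤ decide (∀ j, n ≤ j → x j = true)
        by_cases hn : N ≤ n
        · have h' : (∀ j, n ≤ j → x j = true) := fun j hj => hN j (le_trans hn hj)
          rw [decide_eq_true h']
          exact Bool.le_true _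
        · rw [decide_eq_false hn]
          exact Bool.false_le _
      have hmn := hMono hle
      rw [hEn N] at hmn
      cases hfe : f (fun n => decide (∀ j, n ≤ j → x j = true))
      · rw [hfe] at hmn; exact absurd hmn (by decide)
      · rfl
    · have hlim : liminfF x = false := by
        unfold liminfF; exact decide_eq_false hL
      rw [hlim]
      have hz : (fun n => decide (∀ j, n ≤ j → x j = true)) = fun _ : ℕ => false := by
        funext n
        apply decide_eq_false
        intro hall
        exact hL ⟨n, hall⟩
      rw [hz]
      exact hBot.symm
  -- now the clone-membership argument
  refine Set.mem_sInter.mpr ?_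
  rintro F ⟨hF, hsub⟩
  have hf : (⟨none, f⟩ : BFun) ∈ F := hsub (Set.mem_insert _ _)
  have hand : and2 ∈ F := hsub (Set.mem_insert_iff.mpr (Or.inr rfl))
  have hW : ∀ n k : ℕ, (⟨none, winAnd n k⟩ : BFun) ∈ F := by
    intro n k
    induction k with
    | zero => exact hF.proj none n
    | succ k ih => exact clone_and hF hand ih (hF.proj none (n+k+1))
  have hInner : ∀ n : ℕ, (⟨none, fun x => f (fun k => winAnd n k x)⟩ : BFun) ∈ F :=
    fun n => hF.comp none none f (fun k => winAnd n k) hf (fun k => hW n k)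
  have hOuter : (⟨none, fun x => f (fun n => f (fun k => winAnd n k x))⟩ : BFun) ∈ F :=
    hF.comp none none f (fun n x => f (fun k => winAnd n k x)) hf hInner
  rw [key]
  exact hOuter
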